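/- Let T₁ < T₂ be real numbers, let (s_k)_{k∈ℕ} be real numbers and (δ_k)_{k∈ℕ} positive real numbers such that the closed intervals [s_k - δ_k, s_k + δ_k], k ∈ ℕ, are pairwise disjoint and all contained in (T₁, T₂). If (t_k)_{k∈ℕ} satisfies t_k ∈ [s_k - δ_k/2, s_k + δ_k/2] for all k, then the set of accumulation points of (t_k) equals the set of accumulation points of (s_k). -/
import Mathlib


/-- The set of accumulation points of a sequence `s : ℕ → ℝ`: points every neighborhood of
which contains terms of the sequence for infinitely many indices. -/
def SeqAccPts (s : ℕ → ℝ) : Set ℝ :=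
  {l | ∀ ε > 0, {k : ℕ | |s k - l| < ε}.Infinite}

lemma aux_fin (T₁ T₂ : ℝ) (s δ : ℕ → ℝ) (hδ : ∀ k, 0 < δ k)
    (hdisj : ∀ k l, k ≠ l →
      Disjoint (Set.Icc (s k - δ k) (s k + δ k)) (Set.Icc (s l - δ l) (s l + δ l)))
    (hsub : ∀ k, Set.Icc (s k - δ k) (s k + δ k) ⊆ Set.Ioo T₁ T₂)
    (c : ℝ) (hc : 0 < c) : {k | c ≤ δ k}.Finite := by
  by_contra h
  have hinf : {k | c ≤ δ k}.Infinite := h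
  obtain ⟨N, hN⟩ := exists_nat_gt ((T₂ - T₁) / (2 * c))
  obtain ⟨F, hFsub, hFcard⟩ := hinf.exists_subset_card_eq N
  have hmeas : ∑ k ∈ F, MeasureTheory.volume (Set.Icc (s k - δ k) (s k + δ k))
      ≤ MeasureTheory.volume (Set.Ioo T₁ T₂) := by
    rw [← MeasureTheory.measure_biUnion_finset ?_ (fun k _ => measurableSet_Icc)]
    · exact MeasureTheory.measure_mono (Set.iUnion₂_subset fun k _ => hsub k)
    · intro k hk l hl hkl
      exact hdisj k l hkl
  have hvol : ∀ k, MeasureTheory.volume (Set.Icc (s k - δ k) (s k + δ k))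
      = ENNReal.ofReal (2 * δ k) := by
    intro k
    rw [Real.volume_Icc]
    ring_nf
  have hlb : (N : ENNReal) * ENNReal.ofReal (2 * c)
      ≤ ∑ k ∈ F, MeasureTheory.volume (Set.Icc (s k - δ k) (s k + δ k)) := by
    rw [← hFcard, ← nsmul_eq_mul]
    apply Finset.card_nsmul_le_sum
    intro k hk
    rw [hvol k]
    exact ENNReal.ofReal_le_ofReal (by have := hFsub hk; simp only [Set.mem_setOf_eq] at this; linarith)
  have hub : MeasureTheory.volume (Set.Ioo T₁ T₂) = ENNReal.ofReal (T₂ - T₁) :=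
    Real.volume_Ioo
  have : (N : ENNReal) * ENNReal.ofReal (2 * c) ≤ ENNReal.ofReal (T₂ - T₁) := by
    rw [← hub]; exact hlb.trans hmeas
  have h2c : (0:ℝ) < 2 * c := by linarith
  have hreal : (N : ℝ) * (2 * c) ≤ T₂ - T₁ := by
    have := ENNReal.toReal_mono (ENNReal.ofReal_ne_top) this
    rwa [ENNReal.toReal_mul, ENNReal.toReal_natCast, ENNReal.toReal_ofReal h2c.le,
      ENNReal.toReal_ofReal (by have h0 : s 0 ∈ Set.Icc (s 0 - δ 0) (s 0 + δ 0) := Set.mem_Icc.mpr ⟨by linarith [hδ 0], by linarith [hδ 0]⟩; obtain ⟨ha, hb⟩ := hsub 0 h0; linarith)] at this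
  have : (T₂ - T₁) / (2 * c) < N := hN
  rw [div_lt_iff₀ h2c] at this
  linarith

lemma aux_subset (u v δ : ℕ → ℝ)
    (hclose : ∀ k, |u k - v k| ≤ δ k / 2)
    (hfin : ∀ c > (0:ℝ), {k | c ≤ δ k}.Finite) :
    SeqAccPts u ⊆ SeqAccPts v := by
  intro l hl ε hε
  have h1 : {k : ℕ | |u k - l| < ε / 2}.Infinite := hl (ε / 2) (by linarith)
  have h2 : ({k : ℕ | |u k - l| < ε / 2} \ {k | ε ≤ δ k}).Infinite :=
    h1.diff (hfin ε hε)
  apply h2.mono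
  intro k hk
  obtain ⟨hk1, hk2⟩ := hk
  simp only [Set.mem_setOf_eq] at hk1 hk2 ⊢
  push_neg at hk2
  have := hclose k
  have := abs_sub_abs_le_abs_sub (v k - l) (u k - l)
  have h3 : |v k - l| ≤ |u k - l| + |u k - v k| := by
    calc |v k - l| = |(u k - l) - (u k - v k)| := by ring_nf
      _ ≤ |u k - l| + |u k - v k| := abs_sub _ _
  linarith

/-- Let `T₁ < T₂`, let `(s_k)` and `(δ_k)` with `δ_k > 0` be such that the intervals
`[s_k - δ_k, s_k + δ_k]` are pairwise disjoint and contained in `(T₁, T₂)`. If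
`t_k ∈ [s_k - δ_k/2, s_k + δ_k/2]` for all `k`, then `(t_k)` and `(s_k)` have the same
accumulation points. -/
theorem stmt16 (T₁ T₂ : ℝ) (hT : T₁ < T₂) (s δ t : ℕ → ℝ)
    (hδ : ∀ k, 0 < δ k)
    (hdisj : ∀ k l, k ≠ l →
      Disjoint (Set.Icc (s k - δ k) (s k + δ k)) (Set.Icc (s l - δ l) (s l + δ l)))
    (hsub : ∀ k, Set.Icc (s k - δ k) (s k + δ k) ⊆ Set.Ioo T₁ T₂)
    (ht : ∀ k, t k ∈ Set.Icc (s k - δ k / 2) (s k + δ k / 2)) :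
    SeqAccPts t = SeqAccPts s := by
  have hfin : ∀ c > (0:ℝ), {k | c ≤ δ k}.Finite :=
    fun c hc => aux_fin T₁ T₂ s δ hδ hdisj hsub c hc
  have hclose : ∀ k, |t k - s k| ≤ δ k / 2 := by
    intro k
    obtain ⟨h1, h2⟩ := ht k
    rw [abs_le]; constructor <;> linarith
  have hclose' : ∀ k, |s k - t k| ≤ δ k / 2 := by
    intro k; rw [abs_sub_comm]; exact hclose k
  apply Set.Subset.antisymm
  · exact aux_subset t s δ hclose hfin
  · exact aux_subset s t δ hclose' hfin
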